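/- Let p be a polynomial in the Smith–Kidger Type 1 space P₂ ⊕ span{x₁x₂x₃, x₁²x₂, x₂²x₃, x₃²x₁}. If p vanishes at the four points (1,±1,±1) and at (1,0,0), then the integral of p(1,x₂,x₃) over the square [−1,1]² (in x₂ and x₃) equals zero. -/

import Mathlib

open MvPolynomial

/-!
On the face `x₀ = 1` every monomial `x^v` of an element of `SK1` has `v 1 + v 2 ≤ 3`, so it
restricts to a polynomial of degree at most 3 in `(y, z)`. The five-point cubature rule
`(1/3) · (sum of the values at the four corners) + (8/3) · (value at the centre)` integrates
every such polynomial exactly over `[-1, 1]²`: odd monomials give `0` on both sides, and `1`,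
`y²`, `z²` are checked directly. The hypotheses say that the rule vanishes on `p`.
-/

noncomputable def SK1 : Submodule ℝ (MvPolynomial (Fin 3) ℝ) :=
  MvPolynomial.restrictTotalDegree (Fin 3) ℝ 2 ⊔
    Submodule.span ℝ {X 0 * X 1 * X 2, X 0 ^ 2 * X 1, X 1 ^ 2 * X 2, X 2 ^ 2 * X 0}

lemma continuous_eval_face (p : MvPolynomial (Fin 3) ℝ) :
    Continuous fun yz : ℝ × ℝ => eval ![1, yz.1, yz.2] p :=
  (continuous_eval p).comp (by fun_prop)

lemma intervalIntegrable_eval_face (p : MvPolynomial (Fin 3) ℝ) (y : ℝ) :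
    IntervalIntegrable (fun z => eval ![1, y, z] p) MeasureTheory.volume (-1) 1 :=
  ((continuous_eval_face p).comp (Continuous.prodMk_right y)).intervalIntegrable _ _

lemma intervalIntegrable_integral_eval_face (p : MvPolynomial (Fin 3) ℝ) :
    IntervalIntegrable (fun y => ∫ z in (-1 : ℝ)..1, eval ![1, y, z] p)
      MeasureTheory.volume (-1) 1 :=
  (intervalIntegral.continuous_parametric_intervalIntegral_of_continuous'
    (continuous_eval_face p) _ _).intervalIntegrable _ _

noncomputable def faceIntegral : MvPolynomial (Fin 3) ℝ →ₗ[ℝ] ℝ where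
  toFun p := ∫ y in (-1 : ℝ)..1, ∫ z in (-1 : ℝ)..1, eval ![1, y, z] p
  map_add' p q := by
    simp only [map_add]
    rw [← intervalIntegral.integral_add (intervalIntegrable_integral_eval_face p)
      (intervalIntegrable_integral_eval_face q)]
    exact intervalIntegral.integral_congr fun y _ => intervalIntegral.integral_add
      (intervalIntegrable_eval_face p y) (intervalIntegrable_eval_face q y)
  map_smul' c p := by
    simp only [smul_eval, intervalIntegral.integral_const_mul, RingHom.id_apply, smul_eq_mul]

noncomputable def faceCubature : MvPolynomial (Fin 3) ℝ →ₗ[ℝ] ℝ :=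
  (1 / 3 : ℝ) • ((aeval ![1, 1, 1]).toLinearMap + (aeval ![1, 1, -1]).toLinearMap +
      (aeval ![1, -1, 1]).toLinearMap + (aeval ![1, -1, -1]).toLinearMap) +
    (8 / 3 : ℝ) • (aeval ![1, 0, 0]).toLinearMap

lemma faceCubature_apply (p : MvPolynomial (Fin 3) ℝ) :
    faceCubature p = (1 / 3) * (eval ![1, 1, 1] p + eval ![1, 1, -1] p + eval ![1, -1, 1] p +
      eval ![1, -1, -1] p) + (8 / 3) * eval ![1, 0, 0] p :=
  rfl

lemma integral_square_pow_mul_pow {a b : ℕ} (hab : a + b ≤ 3) :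
    (∫ y in (-1 : ℝ)..1, ∫ z in (-1 : ℝ)..1, y ^ a * z ^ b) =
      (1 / 3) * ((1 : ℝ) ^ a * 1 ^ b + 1 ^ a * (-1) ^ b + (-1) ^ a * 1 ^ b +
        (-1) ^ a * (-1) ^ b) + (8 / 3) * (0 ^ a * 0 ^ b) := by
  simp only [intervalIntegral.integral_const_mul, intervalIntegral.integral_mul_const, integral_pow]
  obtain ⟨ha, hb⟩ : a ≤ 3 ∧ b ≤ 3 - a := by omega
  interval_cases a <;> interval_cases b <;> norm_num

lemma eval_face_monomial (v : Fin 3 →₀ ℕ) (y z : ℝ) :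
    eval ![1, y, z] (monomial v 1) = y ^ v 1 * z ^ v 2 := by
  simp [eval_monomial, Finsupp.prod_fintype, Fin.prod_univ_three]

lemma faceIntegral_monomial_eq_faceCubature {v : Fin 3 →₀ ℕ} (hv : v 1 + v 2 ≤ 3) :
    faceIntegral (monomial v 1) = faceCubature (monomial v 1) := by
  simp only [faceIntegral, LinearMap.coe_mk, AddHom.coe_mk, faceCubature_apply, eval_face_monomial]
  exact integral_square_pow_mul_pow hv

lemma restrictSupport_le_eqLocus :
    restrictSupport ℝ {v : Fin 3 →₀ ℕ | v 1 + v 2 ≤ 3} ≤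
      LinearMap.eqLocus faceIntegral faceCubature := by
  rw [restrictSupport_eq_span, Submodule.span_le, Set.image_subset_iff]
  exact fun v hv => faceIntegral_monomial_eq_faceCubature hv

lemma SK1_le_restrictSupport : SK1 ≤ restrictSupport ℝ {v : Fin 3 →₀ ℕ | v 1 + v 2 ≤ 3} := by
  refine sup_le (restrictSupport_mono ℝ fun v (hv : v.sum (fun _ e => e) ≤ 2) => ?_) ?_
  · rw [Finsupp.sum_fintype _ _ fun _ => rfl, Fin.sum_univ_three] at hv
    exact (by omega : v 1 + v 2 ≤ 3)
  · rw [Submodule.span_le]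
    simp [Set.insert_subset_iff, X, monomial_pow, monomial_mul,
      monomial_mem_restrictSupport]

theorem stmt2 (p : MvPolynomial (Fin 3) ℝ) (hp : p ∈ SK1)
    (h1 : eval ![1, 1, 1] p = 0) (h2 : eval ![1, 1, -1] p = 0)
    (h3 : eval ![1, -1, 1] p = 0) (h4 : eval ![1, -1, -1] p = 0)
    (h5 : eval ![1, 0, 0] p = 0) :
    (∫ y in (-1 : ℝ)..1, ∫ z in (-1 : ℝ)..1, eval ![1, y, z] p) = 0 := by
  have hexact : faceIntegral p = faceCubature p :=
    restrictSupport_le_eqLocus (SK1_le_restrictSupport hp)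
  change faceIntegral p = 0
  rw [hexact, faceCubature_apply, h1, h2, h3, h4, h5]
  norm_num
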